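/- arXiv:1803.02312 — 5 statements merged into one kernel-verified Lean document; each statement's English description precedes it below -/
import Mathlib

section
/- Let m, r be positive integers with r ≤ m, let Ū ∈ ℝ^{m×r} be a matrix with orthonormal columns (ŪᵀŪ = I_r), let E_r = [e_1, …, e_r] ∈ ℝ^{m×r} be the matrix of the first r canonical basis vectors of ℝ^m, and suppose E_rᵀŪ is invertible. Then for every index i ∈ {1, …, m}, the Euclidean norm of the i-th row of Ū is bounded by that of the corresponding corrected row: ‖e_iᵀŪ‖₂ ≤ ‖e_iᵀŪ (E_rᵀŪ)^{-1}‖₂. -/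
open Matrix

/-- Lemma 4.4 of the paper: for `Ū` with orthonormal columns and `E_r` the matrix of the
first `r` canonical basis vectors with `E_rᵀŪ` invertible, the Euclidean norm of each row
of `Ū` is bounded by that of the corresponding row of `Ū (E_rᵀŪ)⁻¹`. -/
theorem principal_angle_upper_bound (m r : ℕ) (hr0 : 0 < r) (hrm : r ≤ m)
    (U : Matrix (Fin m) (Fin r) ℝ) (hU : Uᵀ * U = 1)
    (E : Matrix (Fin m) (Fin r) ℝ) (hE : ∀ i j, E i j = if (i : ℕ) = (j : ℕ) then 1 else 0)
    (hinv : IsUnit (Eᵀ * U).det) :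
    ∀ i : Fin m,
      Real.sqrt (∑ j, (U i j) ^ 2) ≤
        Real.sqrt (∑ j, ((U * (Eᵀ * U)⁻¹) i j) ^ 2) := by
  intro i
  set A := Eᵀ * U with hA
  -- `E` has orthonormal columns
  have hEE : Eᵀ * E = 1 := by
    ext k k'
    simp only [Matrix.mul_apply, Matrix.transpose_apply, hE]
    rw [Finset.sum_eq_single (Fin.castLE hrm k)]
    · simp [Matrix.one_apply, Fin.ext_iff]
    · intro l _ hl
      have h : ¬ ((l : ℕ) = (k : ℕ)) := by
        intro h; exact hl (Fin.ext (by simpa using h))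
      simp [h]
    · simp
  set w : Fin r → ℝ := fun j => (U * A⁻¹) i j with hw
  set x : Fin m → ℝ := E *ᵥ w with hx
  set y : Fin r → ℝ := Uᵀ *ᵥ x with hy
  -- the row of `U` is `y`
  have hxU : y = fun j => U i j := by
    have h1 : y = Aᵀ *ᵥ w := by
      rw [hy, hx, Matrix.mulVec_mulVec, hA, Matrix.transpose_mul, Matrix.transpose_transpose]
    have h2 : Aᵀ *ᵥ w = fun j => ((U * A⁻¹) * A) i j := by
      funext j
      simp [Matrix.mulVec, Matrix.mul_apply, dotProduct, hw, mul_comm]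
    rw [h1, h2, Matrix.mul_assoc, Matrix.nonsing_inv_mul A hinv, Matrix.mul_one]
  have hyy : ∑ j, (U i j) ^ 2 = y ⬝ᵥ y := by
    rw [hxU]; simp [dotProduct, sq]
  have hww : ∑ j, ((U * A⁻¹) i j) ^ 2 = w ⬝ᵥ w := by
    simp [dotProduct, sq, hw]
  -- `x` and `w` have the same norm
  have hxw : x ⬝ᵥ x = w ⬝ᵥ w := by
    calc x ⬝ᵥ x = x ⬝ᵥ (E *ᵥ w) := by rw [← hx]
    _ = (x ᵥ* E) ⬝ᵥ w := (Matrix.dotProduct_mulVec x E w)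
    _ = (Eᵀ *ᵥ x) ⬝ᵥ w := by rw [← Matrix.mulVec_transpose]
    _ = ((Eᵀ * E) *ᵥ w) ⬝ᵥ w := by rw [hx, Matrix.mulVec_mulVec]
    _ = w ⬝ᵥ w := by rw [hEE, Matrix.one_mulVec]
  -- key inequality: `y ⬝ᵥ y ≤ x ⬝ᵥ x`
  set p : Fin m → ℝ := U *ᵥ y with hp
  have hxp : x ⬝ᵥ p = y ⬝ᵥ y := by
    calc x ⬝ᵥ p = (x ᵥ* U) ⬝ᵥ y := Matrix.dotProduct_mulVec x U y
    _ = (Uᵀ *ᵥ x) ⬝ᵥ y := by rw [← Matrix.mulVec_transpose]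
    _ = y ⬝ᵥ y := by rw [← hy]
  have hpp : p ⬝ᵥ p = y ⬝ᵥ y := by
    calc p ⬝ᵥ p = (p ᵥ* U) ⬝ᵥ y := Matrix.dotProduct_mulVec p U y
    _ = (Uᵀ *ᵥ (U *ᵥ y)) ⬝ᵥ y := by rw [← Matrix.mulVec_transpose, hp]
    _ = ((Uᵀ * U) *ᵥ y) ⬝ᵥ y := by rw [Matrix.mulVec_mulVec]
    _ = y ⬝ᵥ y := by rw [hU, Matrix.one_mulVec]
  have hcs : (x ⬝ᵥ p) ^ 2 ≤ (x ⬝ᵥ x) * (p ⬝ᵥ p) := by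
    simpa [dotProduct, sq] using
      Finset.sum_mul_sq_le_sq_mul_sq Finset.univ x p
  have hy0 : 0 ≤ y ⬝ᵥ y := Finset.sum_nonneg fun j _ => mul_self_nonneg _
  have hx0 : 0 ≤ x ⬝ᵥ x := Finset.sum_nonneg fun j _ => mul_self_nonneg _
  have hkey : y ⬝ᵥ y ≤ x ⬝ᵥ x := by nlinarith [hcs, hxp, hpp, hy0, hx0]
  apply Real.sqrt_le_sqrt
  rw [hyy, hww]
  exact hkey.trans_eq hxw
end

section
/- Let Λ = diag(λ_1, …, λ_m) be a diagonal matrix with λ_1 ≥ λ_2 ≥ … ≥ λ_m > 0, let 𝒜_r ⊆ {1, …, m} be a subset of cardinality r, let E_{𝒜_r} ∈ ℝ^{m×r} be the matrix whose columns are the canonical basis vectors e_a for a ∈ 𝒜_r, and let Ē_{𝒜_r} ∈ ℝ^{m×(m−r)} be the matrix whose columns are the canonical basis vectors e_j for j ∉ 𝒜_r. Let Ū ∈ ℝ^{m×r} have orthonormal columns and suppose ‖Ē_{𝒜_r}ᵀŪ‖_F² ≤ δ for some δ ∈ [0, 1). Then the smallest eigenvalue of the symmetric matrix ŪᵀΛŪ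 ∈ ℝ^{r×r} satisfies σ_min(ŪᵀΛŪ) ≥ (min_{a ∈ 𝒜_r} λ_a)·(1 − δ). -/
/-!
Every eigenvalue of `ŪᵀΛŪ` is a Rayleigh quotient, so it suffices to bound
`xᵀŪᵀΛŪx` below for every `x`: with `y = Ūx` it equals `∑ λᵢ yᵢ²`, and
`‖y‖ = ‖x‖` because `Ū` is an isometry. By Cauchy–Schwarz row by row, the mass of `y` outside `𝒜`
is at most `δ‖x‖²`, so at least `(1 - δ)‖x‖²` of it sits on `𝒜`, where every weight `λₐ` is at
least `min_{a ∈ 𝒜} λₐ`; the weights outside `𝒜` are dropped since they are positive.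
-/

open Matrix Finset

theorem Finset.inf'_mul_sum_le_sum_mul {ι R : Type*} [Fintype ι] [CommSemiring R] [LinearOrder R]
    [IsOrderedRing R] {s : Finset ι} (hs : s.Nonempty) {f g : ι → R}
    (hf : ∀ i ∉ s, 0 ≤ f i) (hg : ∀ i, 0 ≤ g i) :
    s.inf' hs f * ∑ i ∈ s, g i ≤ ∑ i, f i * g i :=
  calc s.inf' hs f * ∑ i ∈ s, g i
      ≤ ∑ i ∈ s, f i * g i := by
        rw [mul_sum]
        exact sum_le_sum fun i hi => mul_le_mul_of_nonneg_right (inf'_le f hi) (hg i)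
    _ ≤ ∑ i, f i * g i :=
        sum_le_sum_of_subset_of_nonneg (subset_univ s) fun i _ hi => mul_nonneg (hf i hi) (hg i)

namespace Matrix

variable {m n R : Type*} [Fintype n]

theorem IsHermitian.le_eigenvalues_of_forall_mul_dotProduct_le [DecidableEq n]
    {A : Matrix n n ℝ} (hA : A.IsHermitian) {c : ℝ}
    (h : ∀ x : n → ℝ, c * (x ⬝ᵥ x) ≤ x ⬝ᵥ A *ᵥ x) (i : n) : c ≤ hA.eigenvalues i := by
  have hunit : (⇑(hA.eigenvectorBasis i) : n → ℝ) ⬝ᵥ hA.eigenvectorBasis i = 1 := by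
    have h := real_inner_self_eq_norm_sq (hA.eigenvectorBasis i)
    rwa [EuclideanSpace.inner_eq_star_dotProduct, star_trivial,
      hA.eigenvectorBasis.orthonormal.1 i, one_pow] at h
  simpa [hA.eigenvalues_eq i, hunit] using h (hA.eigenvectorBasis i)

theorem dotProduct_transpose_mul_diagonal_mul_mulVec [Fintype m] [CommSemiring R]
    [DecidableEq m] (U : Matrix m n R) (d : m → R) (x : n → R) :
    x ⬝ᵥ (Uᵀ * diagonal d * U) *ᵥ x = ∑ i, d i * (U *ᵥ x) i ^ 2 := by
  rw [Matrix.mul_assoc, ← mulVec_mulVec, dotProduct_mulVec, vecMul_transpose, ← mulVec_mulVec]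
  simp only [dotProduct, mulVec_diagonal]
  exact sum_congr rfl fun i _ => by ring

theorem mulVec_dotProduct_mulVec_of_transpose_mul_self [Fintype m] [CommSemiring R]
    [DecidableEq n] {U : Matrix m n R} (hU : Uᵀ * U = 1) (x : n → R) :
    U *ᵥ x ⬝ᵥ U *ᵥ x = x ⬝ᵥ x := by
  rw [dotProduct_mulVec, ← mulVec_transpose, mulVec_mulVec, hU, one_mulVec]

theorem sum_sq_mulVec_le [CommRing R] [LinearOrder R] [IsStrictOrderedRing R]
    (U : Matrix m n R) (s : Finset m) (x : n → R) :
    ∑ i ∈ s, (U *ᵥ x) i ^ 2 ≤ (∑ i ∈ s, ∑ j, U i j ^ 2) * (x ⬝ᵥ x) := by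
  rw [sum_mul]
  refine sum_le_sum fun i _ => ?_
  simpa [mulVec, dotProduct, sq] using sum_mul_sq_le_sq_mul_sq univ (U i) x

end Matrix

/-- Lemma B.1 of the paper (with the `O(δ)` made explicit): if `Ū` has orthonormal columns
and the Frobenius norm squared of `Ē_{𝒜_r}ᵀŪ` (i.e. the total squared mass of the rows of `Ū`
outside the index set `𝒜`) is at most `δ < 1`, then every eigenvalue of the symmetric matrix
`ŪᵀΛŪ` is at least `(min_{a ∈ 𝒜} λ_a)·(1 − δ)`. -/
theorem smallest_eigenvalue_bound (m r : ℕ) (hr0 : 0 < r)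
    (lam : Fin m → ℝ)
    (hpos : ∀ i, 0 < lam i)
    (𝒜 : Finset (Fin m)) (hcard : 𝒜.card = r)
    (U : Matrix (Fin m) (Fin r) ℝ) (hU : Uᵀ * U = 1)
    (δ : ℝ)
    (htail : ∑ i ∈ 𝒜ᶜ, ∑ j, (U i j) ^ 2 ≤ δ)
    (hM : (Uᵀ * Matrix.diagonal lam * U).IsHermitian) :
    ∀ k : Fin r,
      (𝒜.inf' (Finset.card_pos.mp (by omega)) lam) * (1 - δ) ≤ hM.eigenvalues k := by
  have hA : 𝒜.Nonempty := Finset.card_pos.mp (by omega)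
  have hlam0 : 0 ≤ 𝒜.inf' hA lam := (Finset.le_inf'_iff hA lam).mpr fun i _ => (hpos i).le
  refine hM.le_eigenvalues_of_forall_mul_dotProduct_le fun x => ?_
  set y := U *ᵥ x
  have hxx : 0 ≤ x ⬝ᵥ x := by simpa using dotProduct_self_star_nonneg x
  have hsplit : ∑ i ∈ 𝒜, y i ^ 2 + ∑ i ∈ 𝒜ᶜ, y i ^ 2 = x ⬝ᵥ x := by
    rw [sum_add_sum_compl, ← mulVec_dotProduct_mulVec_of_transpose_mul_self hU x]
    simp only [dotProduct, sq, y]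
  have hhead : (1 - δ) * (x ⬝ᵥ x) ≤ ∑ i ∈ 𝒜, y i ^ 2 := by
    have := (sum_sq_mulVec_le U 𝒜ᶜ x).trans (mul_le_mul_of_nonneg_right htail hxx)
    linarith
  calc 𝒜.inf' hA lam * (1 - δ) * (x ⬝ᵥ x)
      ≤ 𝒜.inf' hA lam * ∑ i ∈ 𝒜, y i ^ 2 := by
        rw [mul_assoc]
        exact mul_le_mul_of_nonneg_left hhead hlam0
    _ ≤ ∑ i, lam i * y i ^ 2 :=
        Finset.inf'_mul_sum_le_sum_mul hA (fun i _ => (hpos i).le) fun i => sq_nonneg _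
    _ = x ⬝ᵥ (Uᵀ * diagonal lam * U) *ᵥ x := (dotProduct_transpose_mul_diagonal_mul_mulVec ..).symm
end

section
/- Let μ and ν be Borel probability measures on ℝ^m, each with finite second moment ∫‖x‖₂² dμ(x) < ∞ and ∫‖x‖₂² dν(x) < ∞, and let M(μ) = ∫ x xᵀ dμ(x) and M(ν) = ∫ x xᵀ dν(x) denote their second-moment matrices (defined entrywise). Then for every t > 0, the spectral norm of the difference satisfies ‖M(μ) − M(ν)‖₂ ≤ 2t·D_TV(μ, ν) + ∫_{‖x‖₂² > t} ‖x‖₂² dμ(x) + ∫_{‖x‖₂² > t} ‖x‖₂² dν(x), where D_TV(μ, ν) = sup_{A measurable} |μ(A) − ν(A)| is the total variation distance. -/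
/-! Pairing `M(μ) - M(ν)` with unit vectors `u`, `v` gives `∫ F dμ - ∫ F dν` for
`F x = ⟪u, x⟫ ⟪v, x⟫`, and `|F x| ≤ ‖x‖²`. Split `F` along `{‖x‖² ≤ t}`. There `|F| ≤ t`, and
integrating `F` over the two sides of a Hahn decomposition `s` of `μ - ν` costs at most
`t (μ(s) - ν(s)) + t (ν(sᶜ) - μ(sᶜ)) ≤ 2t D_TV(μ, ν)`. On `{‖x‖² > t}` each integral is at most the
tail second moment. -/

open Matrix MeasureTheory

/-- The spectral norm (largest singular value) of a real matrix, realized as the operator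
norm of the induced linear map between Euclidean spaces. -/
noncomputable def matrixSpectralNorm {m n : ℕ} (A : Matrix (Fin m) (Fin n) ℝ) : ℝ :=
  ‖LinearMap.toContinuousLinearMap (Matrix.toEuclideanLin A)‖

/-- Total variation distance `D_TV(μ, ν) = sup_{A measurable} |μ(A) − ν(A)|`. -/
noncomputable def tvDist {V : Type*} [MeasurableSpace V] (μ ν : Measure V) : ℝ :=
  ⨆ A : {s : Set V // MeasurableSet s}, |(μ A).toReal - (ν A).toReal|

/-- The second-moment matrix `M(μ) = ∫ x xᵀ dμ(x)`, defined entrywise. -/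
noncomputable def secondMoment {m : ℕ} (μ : Measure (Fin m → ℝ)) :
    Matrix (Fin m) (Fin m) ℝ :=
  Matrix.of fun i j => ∫ x, x i * x j ∂μ

open Set RealInnerProductSpace

section TotalVariation

variable {V : Type*} [MeasurableSpace V]

theorem abs_integral_sub_integral_le_of_le {ρ ρ' : Measure V} [IsFiniteMeasure ρ'] (hρ : ρ ≤ ρ')
    {g : V → ℝ} {c : ℝ} (hg : Measurable g) (hgc : ∀ x, ‖g x‖ ≤ c) :
    |∫ x, g x ∂ρ' - ∫ x, g x ∂ρ| ≤ c * (ρ'.real univ - ρ.real univ) := by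
  have : IsFiniteMeasure ρ := isFiniteMeasure_of_le ρ' hρ
  obtain ⟨σ, rfl⟩ : ∃ σ, ρ' = σ + ρ := ⟨ρ' - ρ, (Measure.sub_add_cancel_of_le hρ).symm⟩
  have : IsFiniteMeasure σ := isFiniteMeasure_of_le (σ + ρ) (Measure.le_add_right le_rfl)
  have hgi : ∀ ρ'' : Measure V, [IsFiniteMeasure ρ''] → Integrable g ρ'' := fun _ _ =>
    .of_bound hg.aestronglyMeasurable c (ae_of_all _ hgc)
  rw [integral_add_measure (hgi σ) (hgi ρ), measureReal_add_apply, add_sub_cancel_right,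
    add_sub_cancel_right]
  exact norm_integral_le_of_norm_le_const (ae_of_all _ hgc)

variable (μ ν : Measure V) [IsFiniteMeasure μ] [IsFiniteMeasure ν]

theorem abs_measureReal_sub_le_tvDist {s : Set V} (hs : MeasurableSet s) :
    |μ.real s - ν.real s| ≤ tvDist μ ν := by
  refine le_ciSup (f := fun A : {s : Set V // MeasurableSet s} => |(μ A).toReal - (ν A).toReal|)
    ⟨μ.real univ + ν.real univ, ?_⟩ ⟨s, hs⟩
  rintro _ ⟨A, rfl⟩
  refine (abs_sub _ _).trans ?_
  rw [abs_of_nonneg ENNReal.toReal_nonneg, abs_of_nonneg ENNReal.toReal_nonneg]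
  exact add_le_add (measureReal_mono (subset_univ _)) (measureReal_mono (subset_univ _))

theorem tvDist_nonneg : 0 ≤ tvDist μ ν :=
  (abs_nonneg _).trans (abs_measureReal_sub_le_tvDist μ ν MeasurableSet.empty)

theorem integral_sub_integral_le_two_mul_tvDist {g : V → ℝ} {c : ℝ} (hg : Measurable g)
    (hgc : ∀ x, ‖g x‖ ≤ c) :
    ∫ x, g x ∂μ - ∫ x, g x ∂ν ≤ 2 * c * tvDist μ ν := by
  rcases isEmpty_or_nonempty V with _ | ⟨⟨x₀⟩⟩
  · simp [Measure.eq_zero_of_isEmpty μ, Measure.eq_zero_of_isEmpty ν, tvDist]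
  have hc : 0 ≤ c := (norm_nonneg _).trans (hgc x₀)
  obtain ⟨s, hs, hνμ, hμν⟩ := hahn_decomposition μ ν
  have hs₁ : ν.restrict s ≤ μ.restrict s := Measure.le_iff.2 fun A hA => by
    simpa only [Measure.restrict_apply hA] using hνμ _ (hA.inter hs) inter_subset_right
  have hs₂ : μ.restrict sᶜ ≤ ν.restrict sᶜ := Measure.le_iff.2 fun A hA => by
    simpa only [Measure.restrict_apply hA] using hμν _ (hA.inter hs.compl) inter_subset_right
  have e₁ := (abs_integral_sub_integral_le_of_le hs₁ hg hgc).trans' (le_abs_self _)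
  have e₂ := (abs_integral_sub_integral_le_of_le hs₂ hg hgc).trans' (neg_le_abs _)
  simp only [measureReal_restrict_apply_univ] at e₁ e₂
  have d₁ := (le_abs_self _).trans (abs_measureReal_sub_le_tvDist μ ν hs)
  have d₂ := (neg_le_abs _).trans (abs_measureReal_sub_le_tvDist μ ν hs.compl)
  have hgi : ∀ ρ : Measure V, [IsFiniteMeasure ρ] → Integrable g ρ := fun _ _ =>
    .of_bound hg.aestronglyMeasurable c (ae_of_all _ hgc)
  rw [← integral_add_compl hs (hgi μ), ← integral_add_compl hs (hgi ν)]
  linarith [mul_le_mul_of_nonneg_left d₁ hc, mul_le_mul_of_nonneg_left d₂ hc]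

theorem integral_sub_integral_le_tvDist_add_tails {F N : V → ℝ} {c t : ℝ} (hF : Measurable F)
    (hN : Measurable N) (hNμ : Integrable N μ) (hNν : Integrable N ν) (hc : 0 ≤ c) (ht : 0 ≤ t)
    (hFN : ∀ x, ‖F x‖ ≤ c * N x) :
    ∫ x, F x ∂μ - ∫ x, F x ∂ν ≤
      2 * (c * t) * tvDist μ ν + c * ∫ x in {x | t < N x}, N x ∂μ
        + c * ∫ x in {x | t < N x}, N x ∂ν := by
  set S := {x | t < N x}
  have hS : MeasurableSet S := measurableSet_lt measurable_const hN
  have hFi : ∀ ρ : Measure V, Integrable N ρ → Integrable F ρ := fun ρ hρ =>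
    (hρ.const_mul c).mono' hF.aestronglyMeasurable (ae_of_all _ hFN)
  have tail : ∀ ρ : Measure V, Integrable N ρ → |∫ x in S, F x ∂ρ| ≤ c * ∫ x in S, N x ∂ρ :=
    fun ρ hρ => by
      rw [← integral_const_mul]
      exact norm_integral_le_of_norm_le (hρ.const_mul c).integrableOn (ae_of_all _ hFN)
  have body : ∫ x in Sᶜ, F x ∂μ - ∫ x in Sᶜ, F x ∂ν ≤ 2 * (c * t) * tvDist μ ν := by
    rw [← integral_indicator hS.compl, ← integral_indicator hS.compl]
    refine integral_sub_integral_le_two_mul_tvDist μ ν (hF.indicator hS.compl) fun x => ?_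
    by_cases hx : x ∈ S
    · simp [hx]; positivity
    · rw [indicator_of_mem hx]
      exact (hFN x).trans (mul_le_mul_of_nonneg_left (not_lt.1 hx) hc)
  rw [← integral_add_compl hS (hFi μ hNμ), ← integral_add_compl hS (hFi ν hNν)]
  linarith [(abs_le.1 (tail μ hNμ)).2, (abs_le.1 (tail ν hNν)).1]

end TotalVariation

theorem abs_inner_mul_inner_le {E : Type*} [NormedAddCommGroup E] [InnerProductSpace ℝ E]
    (u v x : E) : |⟪u, x⟫ * ⟪v, x⟫| ≤ ‖u‖ * ‖v‖ * ‖x‖ ^ 2 := by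
  rw [abs_mul]
  calc _ ≤ (‖u‖ * ‖x‖) * (‖v‖ * ‖x‖) :=
        mul_le_mul (abs_real_inner_le_norm u x) (abs_real_inner_le_norm v x) (abs_nonneg _)
          (by positivity)
    _ = _ := by ring

section SecondMoment

variable {m : ℕ}

theorem sum_sq_eq_norm_toLp_sq (x : Fin m → ℝ) : ∑ i, x i ^ 2 = ‖WithLp.toLp 2 x‖ ^ 2 := by
  simp [EuclideanSpace.real_norm_sq_eq]

theorem integrable_apply_mul_apply {μ : Measure (Fin m → ℝ)}
    (hμ : Integrable (fun x => ∑ i, x i ^ 2) μ) (i j : Fin m) :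
    Integrable (fun x => x i * x j) μ := by
  refine hμ.mono' (by fun_prop) (ae_of_all _ fun x => ?_)
  have := abs_inner_mul_inner_le (EuclideanSpace.single i 1) (EuclideanSpace.single j 1)
    (WithLp.toLp 2 x)
  simpa [EuclideanSpace.inner_single_left, sum_sq_eq_norm_toLp_sq, abs_mul] using this

theorem inner_toEuclideanLin_secondMoment {μ : Measure (Fin m → ℝ)}
    (hμ : Integrable (fun x => ∑ i, x i ^ 2) μ) (u v : EuclideanSpace ℝ (Fin m)) :
    ⟪u, toEuclideanLin (secondMoment μ) v⟫ =
      ∫ x, ⟪u, WithLp.toLp 2 x⟫ * ⟪v, WithLp.toLp 2 x⟫ ∂μ := by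
  have hexp : ∀ x : Fin m → ℝ, ⟪u, WithLp.toLp 2 x⟫ * ⟪v, WithLp.toLp 2 x⟫ =
      ∑ i, ∑ j, u i * v j * (x i * x j) := fun x => by
    simp only [PiLp.inner_apply, RCLike.inner_apply, conj_trivial, Finset.sum_mul_sum]
    refine Finset.sum_congr rfl fun i _ => Finset.sum_congr rfl fun j _ => by ring
  simp_rw [hexp]
  rw [integral_finsetSum _ fun i _ => integrable_finsetSum _ fun j _ =>
    (integrable_apply_mul_apply hμ i j).const_mul _]
  simp_rw [integral_finsetSum _ fun j _ => (integrable_apply_mul_apply hμ _ j).const_mul _,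
    integral_const_mul]
  simp only [PiLp.inner_apply, RCLike.inner_apply, conj_trivial, ofLp_toLpLin, toLin'_apply,
    mulVec, dotProduct, secondMoment, of_apply, Finset.sum_mul]
  refine Finset.sum_congr rfl fun i _ => Finset.sum_congr rfl fun j _ => by ring

end SecondMoment

/-- The core truncation estimate in the proof of Lemma 2.4 of the paper: the spectral norm
of the difference of second-moment matrices of two probability measures on `ℝ^m` is bounded
by `2t·D_TV(μ, ν)` plus the truncated second moments above level `t`. -/
theorem secondMoment_diff_le_tv_add_tails (m : ℕ) (μ ν : Measure (Fin m → ℝ))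
    [IsProbabilityMeasure μ] [IsProbabilityMeasure ν]
    (hμ : Integrable (fun x => ∑ i, (x i) ^ 2) μ)
    (hν : Integrable (fun x => ∑ i, (x i) ^ 2) ν) :
    ∀ t : ℝ, 0 < t →
      matrixSpectralNorm (secondMoment μ - secondMoment ν) ≤
        2 * t * tvDist μ ν
          + ∫ x in {x : Fin m → ℝ | t < ∑ i, (x i) ^ 2}, (∑ i, (x i) ^ 2) ∂μ
          + ∫ x in {x : Fin m → ℝ | t < ∑ i, (x i) ^ 2}, (∑ i, (x i) ^ 2) ∂ν := by
  intro t ht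
  have hN : Measurable fun x : Fin m → ℝ => ∑ i, x i ^ 2 := by fun_prop
  refine ContinuousLinearMap.opNorm_le_of_re_inner_le
    (by have := tvDist_nonneg μ ν; positivity) fun v u hv hu => ?_
  have hF : Measurable fun x : Fin m → ℝ => ⟪u, WithLp.toLp 2 x⟫ * ⟪v, WithLp.toLp 2 x⟫ := by
    fun_prop
  calc
    _ = ∫ x, ⟪u, WithLp.toLp 2 x⟫ * ⟪v, WithLp.toLp 2 x⟫ ∂μ
        - ∫ x, ⟪u, WithLp.toLp 2 x⟫ * ⟪v, WithLp.toLp 2 x⟫ ∂ν := by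
      rw [RCLike.re_to_real, real_inner_comm, LinearMap.coe_toContinuousLinearMap', map_sub,
        LinearMap.sub_apply, inner_sub_right, inner_toEuclideanLin_secondMoment hμ,
        inner_toEuclideanLin_secondMoment hν]
    _ ≤ _ := integral_sub_integral_le_tvDist_add_tails μ ν hF hN hμ hν (c := ‖u‖ * ‖v‖)
        (by positivity) ht.le
        fun x => (abs_inner_mul_inner_le u v _).trans_eq (by rw [sum_sq_eq_norm_toLp_sq])
    _ = _ := by rw [hu, hv]; ring
end

section
/- Let K > 0, G > 0, η > 0, δ > 0, and ν ∈ (0, 1). Let Φ denote the cumulative distribution function of the standard real Gaussian distribution N(0, 1), and let q < 0 be the number satisfying Φ(q) = (1 − ν/2)/2. Define T₁ = (1/(2K))·log( (2K η^{-1} δ²)/(q² G²) + 1 ). Then for every T ≥ T₁, if Z is a real Gaussian random variable with mean 0 and variance σ²(T) = (G²/(2K))·(e^{2KT} − 1), we have ℙ(Z² ≥ η^{-1} δ²) ≥ 1 − ν. -/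
/-!
Write `Z = σ N` with `N` standard normal. As soon as `q² σ² ≥ η⁻¹ δ²`, which is exactly what
`T ≥ T₁` guarantees, the event `{Z² ≥ η⁻¹ δ²}` contains both tails `{N ≤ q} ∪ {N ≥ -q}`; by the
symmetry of `N` these have total mass `2 Φ(q) = 1 - ν/2 ≥ 1 - ν`.
-/

open MeasureTheory ProbabilityTheory
open scoped NNReal

lemma gaussianReal_zero_Ici_neg (v : ℝ≥0) (q : ℝ) :
    gaussianReal 0 v (Set.Ici (-q)) = gaussianReal 0 v (Set.Iic q) := by
  conv_lhs => rw [← neg_zero, ← gaussianReal_map_neg]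
  rw [Measure.map_apply measurable_neg measurableSet_Ici]
  simp

lemma gaussianReal_zero_Iic_union_Ici_neg (v : ℝ≥0) {q : ℝ} (hq : q < 0) :
    gaussianReal 0 v (Set.Iic q ∪ Set.Ici (-q)) = 2 * gaussianReal 0 v (Set.Iic q) := by
  have hdisj : Disjoint (Set.Iic q) (Set.Ici (-q)) := Set.Iic_disjoint_Ici.mpr (by linarith)
  rw [measure_union hdisj measurableSet_Ici, gaussianReal_zero_Ici_neg, two_mul]

lemma gaussianReal_zero_eq_map_sqrt_mul (v : ℝ≥0) :
    gaussianReal 0 v = (gaussianReal 0 1).map (√(v : ℝ) * ·) := by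
  rw [gaussianReal_map_const_mul]
  congr
  · simp
  · ext; simp

lemma two_mul_ofReal_cdf_le_gaussianReal_le_sq {v : ℝ≥0} {q a : ℝ} (hq : q < 0)
    (ha : a ≤ q ^ 2 * v) :
    2 * ENNReal.ofReal (cdf (gaussianReal 0 1) q) ≤ gaussianReal 0 v {x | a ≤ x ^ 2} := by
  have hmeas : MeasurableSet {x : ℝ | a ≤ x ^ 2} :=
    measurableSet_le measurable_const (measurable_id.pow_const 2)
  have htails : Set.Iic q ∪ Set.Ici (-q) ⊆ (√(v : ℝ) * ·) ⁻¹' {x | a ≤ x ^ 2} := by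
    intro x hx
    have hqx : q ^ 2 ≤ x ^ 2 := by
      rcases hx with hx | hx
      · nlinarith [Set.mem_Iic.mp hx]
      · nlinarith [Set.mem_Ici.mp hx]
    calc a ≤ q ^ 2 * v := ha
      _ ≤ x ^ 2 * v := by gcongr
      _ = (√(v : ℝ) * x) ^ 2 := by rw [mul_pow, Real.sq_sqrt v.coe_nonneg, mul_comm]
  rw [gaussianReal_zero_eq_map_sqrt_mul v, Measure.map_apply (measurable_const_mul _) hmeas,
    ofReal_cdf, ← gaussianReal_zero_Iic_union_Ici_neg 1 hq]
  exact measure_mono htails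

lemma le_exp_mul_sub_one_of_inv_mul_log_le {r c T : ℝ} (hr : 0 < r) (hc : 0 < c + 1)
    (hT : 1 / r * Real.log (c + 1) ≤ T) : c ≤ Real.exp (r * T) - 1 := by
  have hlog : Real.log (c + 1) ≤ r * T := by
    rwa [one_div, inv_mul_le_iff₀ hr] at hT
  linarith [(Real.log_le_iff_le_exp hc).mp hlog]

theorem saddle_escape_time_general (K G η δ ν : ℝ)
    (hK : 0 < K) (hG : 0 < G) (hη : 0 < η) (hν : ν ∈ Set.Ioo (0 : ℝ) 1)
    (q : ℝ) (hq : q < 0) (hΦ : cdf (gaussianReal 0 1) q = (1 - ν / 2) / 2) :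
    ∀ T : ℝ, (1 / (2 * K)) * Real.log (2 * K * η⁻¹ * δ ^ 2 / (q ^ 2 * G ^ 2) + 1) ≤ T →
      ENNReal.ofReal (1 - ν) ≤
        gaussianReal 0
            (Real.toNNReal ((G ^ 2 / (2 * K)) * (Real.exp (2 * K * T) - 1)))
            {x : ℝ | η⁻¹ * δ ^ 2 ≤ x ^ 2} := by
  intro T hT
  set v := G ^ 2 / (2 * K) * (Real.exp (2 * K * T) - 1)
  have hc : 0 ≤ 2 * K * η⁻¹ * δ ^ 2 / (q ^ 2 * G ^ 2) := by positivity
  have hexp := le_exp_mul_sub_one_of_inv_mul_log_le (by positivity) (by linarith) hT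
  have hv : 0 ≤ v := mul_nonneg (by positivity) (by linarith)
  have hthreshold : η⁻¹ * δ ^ 2 ≤ q ^ 2 * (Real.toNNReal v : ℝ) := by
    rw [Real.coe_toNNReal v hv]
    have hq0 : q ≠ 0 := hq.ne
    calc η⁻¹ * δ ^ 2 = q ^ 2 * (G ^ 2 / (2 * K)) * (2 * K * η⁻¹ * δ ^ 2 / (q ^ 2 * G ^ 2)) := by
          field_simp
      _ ≤ q ^ 2 * (G ^ 2 / (2 * K)) * (Real.exp (2 * K * T) - 1) := by gcongr
      _ = q ^ 2 * v := by ring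
  calc ENNReal.ofReal (1 - ν)
      ≤ 2 * ENNReal.ofReal ((1 - ν / 2) / 2) := by
        rw [← ENNReal.ofReal_ofNat 2, ← ENNReal.ofReal_mul zero_le_two]
        exact ENNReal.ofReal_le_ofReal (by linarith [hν.1])
    _ ≤ _ := hΦ ▸ two_mul_ofReal_cdf_le_gaussianReal_le_sq hq hthreshold

/-- Proposition 4.7 of the paper (escape from saddle points): let `Φ` be the standard
Gaussian CDF and `q < 0` with `Φ(q) = (1 − ν/2)/2`. With
`T₁ = (1/(2K)) log(2Kη⁻¹δ²/(q²G²) + 1)`, for every `T ≥ T₁` a centered Gaussian with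
variance `σ²(T) = (G²/(2K))(e^{2KT} − 1)` satisfies `ℙ(Z² ≥ η⁻¹δ²) ≥ 1 − ν`. -/
theorem saddle_escape_time (K G η δ ν : ℝ)
    (hK : 0 < K) (hG : 0 < G) (hη : 0 < η) (hδ : 0 < δ) (hν : ν ∈ Set.Ioo (0 : ℝ) 1)
    (q : ℝ) (hq : q < 0) (hΦ : cdf (gaussianReal 0 1) q = (1 - ν / 2) / 2) :
    ∀ T : ℝ, (1 / (2 * K)) * Real.log (2 * K * η⁻¹ * δ ^ 2 / (q ^ 2 * G ^ 2) + 1) ≤ T →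
      ENNReal.ofReal (1 - ν) ≤
        gaussianReal 0
            (Real.toNNReal ((G ^ 2 / (2 * K)) * (Real.exp (2 * K * T) - 1)))
            {x : ℝ | η⁻¹ * δ ^ 2 ≤ x ^ 2} :=
  saddle_escape_time_general K G η δ ν hK hG hη hν q hq hΦ
end

section
/- Let λ_r > λ_{r+1}, set Δ = λ_r − λ_{r+1} > 0, and let ε > 0, η > 0, δ > 0, r, m be given with r < m. For i = r+1, …, m and j = 1, …, r let ζ_ij(T) be real square-integrable random variables on a probability space and suppose 𝔼[ζ_ij(T)²] ≤ ζ_ij(0)²·e^{−2ΔT} + G_ij²/(2Δ), where ζ_ij(0), G_ij ≥ 0 are constants with η·Σ_{i=r+1}^m Σ_{j=1}^r ζ_ij(0)² ≤ δ², and let G_m = max_{1 ≤ j ≤ r} Σ_{i=r+1}^m G_ij². Assume Δε > 4·η·r·G_m and T ≥ max(0, (1/(2Δ))·log( 8Δδ² / (Δε − 4ηrG_m) )). Then ℙ( η·Σ_{i=r+1}^m Σ_{j=1}^r ζ_ij(T)² ≤ ε ) ≥ 3/4. -/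
/-!
Summing the moment bounds, the mean of `η Σ ζ_ij(T)²` is at most
`δ² e^{-2ΔT} + η r G_m / (2Δ)`. The lower bound on `T` makes the first term at most
`(Δε - 4ηrG_m) / (8Δ)`, so the mean is at most `ε / 8`, and Markov's inequality bounds the
probability of `η Σ ζ_ij(T)² > ε` by `1/8`.
-/

open Finset MeasureTheory

open Real in
theorem mul_exp_neg_le_of_log_div_le {a c k t : ℝ} (ha : 0 ≤ a) (hc : 0 < c) (hk : 0 < k)
    (ht : 1 / k * log (a / c) ≤ t) : a * exp (-k * t) ≤ c := by
  rcases ha.eq_or_lt with rfl | ha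
  · simpa using hc.le
  have hlog : log (a / c) ≤ k * t := by
    rwa [one_div, inv_mul_le_iff₀ hk] at ht
  calc a * exp (-k * t) ≤ a * exp (-log (a / c)) := by gcongr; linarith
    _ = c := by rw [exp_neg, exp_log (div_pos ha hc), inv_div, mul_div_cancel₀ _ ha.ne']

theorem Finset.sum_sum_le_card_nsmul_sup' {ι κ M : Type*} [AddCommMonoid M] [LinearOrder M]
    [IsOrderedAddMonoid M] (s : Finset ι) {t : Finset κ} (ht : t.Nonempty) (f : ι → κ → M) :
    ∑ i ∈ s, ∑ j ∈ t, f i j ≤ #t • t.sup' ht (fun j => ∑ i ∈ s, f i j) := by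
  rw [Finset.sum_comm]
  exact sum_le_card_nsmul _ _ _ fun j hj => le_sup' (fun j => ∑ i ∈ s, f i j) hj

theorem integral_sum_sum_le {Ω ι κ : Type*} [MeasurableSpace Ω] {μ : Measure Ω}
    (s : Finset ι) (t : Finset κ) {f : ι → κ → Ω → ℝ} {g : ι → κ → ℝ}
    (hf : ∀ i j, Integrable (f i j) μ)
    (hfg : ∀ i ∈ s, ∀ j ∈ t, ∫ ω, f i j ω ∂μ ≤ g i j) :
    ∫ ω, ∑ i ∈ s, ∑ j ∈ t, f i j ω ∂μ ≤ ∑ i ∈ s, ∑ j ∈ t, g i j := by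
  rw [integral_finsetSum _ fun i _ => integrable_finsetSum _ fun j _ => hf i j]
  refine sum_le_sum fun i hi => ?_
  rw [integral_finsetSum _ fun j _ => hf i j]
  exact sum_le_sum fun j hj => hfg i hi j hj

theorem ofReal_one_sub_integral_div_le_measure_setOf_le {Ω : Type*} [MeasurableSpace Ω]
    {μ : Measure Ω} [IsProbabilityMeasure μ] {f : Ω → ℝ} (hf_nonneg : 0 ≤ f)
    (hf_int : Integrable f μ) {ε : ℝ} (hε : 0 < ε) :
    ENNReal.ofReal (1 - (∫ ω, f ω ∂μ) / ε) ≤ μ {ω | f ω ≤ ε} := by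
  have htail : μ {ω | ε < f ω} ≤ ENNReal.ofReal ((∫ ω, f ω ∂μ) / ε) := by
    have hmarkov := mul_meas_ge_le_integral_of_nonneg (ae_of_all μ hf_nonneg) hf_int ε
    calc μ {ω | ε < f ω} ≤ μ {ω | ε ≤ f ω} :=
        measure_mono fun ω (hω : ε < f ω) => hω.le
      _ = ENNReal.ofReal (μ.real {ω | ε ≤ f ω}) :=
        (ofReal_measureReal (measure_ne_top _ _)).symm
      _ ≤ ENNReal.ofReal ((∫ ω, f ω ∂μ) / ε) := by
        gcongr; rwa [le_div_iff₀' hε]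
  have hcompl : {ω | ε < f ω} = {ω | f ω ≤ ε}ᶜ := by ext ω; simp
  rw [ENNReal.ofReal_sub _ (div_nonneg (integral_nonneg hf_nonneg) hε.le), ENNReal.ofReal_one,
    tsub_le_iff_right]
  calc (1 : ENNReal) = μ Set.univ := measure_univ.symm
    _ ≤ μ {ω | f ω ≤ ε} + μ {ω | ε < f ω} := hcompl ▸ measure_univ_le_add_compl _
    _ ≤ _ := by gcongr

theorem mul_sum_sum_moment_bounds_le {ι κ : Type*} (s : Finset ι) (t : Finset κ)
    (ζ0 G : ι → κ → ℝ) {Δ ε η δ T n Gm : ℝ} (hΔ : 0 < Δ) (hη : 0 ≤ η)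
    (hinit : η * ∑ i ∈ s, ∑ j ∈ t, (ζ0 i j) ^ 2 ≤ δ ^ 2)
    (hnoise : ∑ i ∈ s, ∑ j ∈ t, (G i j) ^ 2 ≤ n * Gm) (hslack : 4 * η * n * Gm < Δ * ε)
    (hT : 1 / (2 * Δ) * Real.log (8 * Δ * δ ^ 2 / (Δ * ε - 4 * η * n * Gm)) ≤ T) :
    η * ∑ i ∈ s, ∑ j ∈ t, ((ζ0 i j) ^ 2 * Real.exp (-2 * Δ * T) + (G i j) ^ 2 / (2 * Δ))
      ≤ ε / 8 := by
  set decay := Real.exp (-2 * Δ * T)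
  have hdecay : 8 * Δ * δ ^ 2 * decay ≤ Δ * ε - 4 * η * n * Gm := by
    simpa only [decay, neg_mul] using
      mul_exp_neg_le_of_log_div_le (by positivity) (sub_pos.mpr hslack) (by positivity) hT
  calc _ = η * (∑ i ∈ s, ∑ j ∈ t, (ζ0 i j) ^ 2) * decay
        + η * (∑ i ∈ s, ∑ j ∈ t, (G i j) ^ 2) / (2 * Δ) := by
        simp only [sum_add_distrib, ← sum_mul, ← sum_div]; ring
    _ ≤ δ ^ 2 * decay + η * (n * Gm) / (2 * Δ) := by gcongr
    _ ≤ (Δ * ε - 4 * η * n * Gm) / (8 * Δ) + η * (n * Gm) / (2 * Δ) := by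
      gcongr
      rw [le_div_iff₀ (by positivity)]
      linarith
    _ = ε / 8 := by field_simp; ring

theorem stage3_convergence_time_general
    {Ω : Type*} [MeasurableSpace Ω] (P : Measure Ω) [IsProbabilityMeasure P]
    (m r : ℕ) (hr0 : 0 < r)
    (lamr lamr1 : ℝ) (hgap : lamr1 < lamr)
    (ε η δ T : ℝ) (hε : 0 < ε) (hη : 0 < η)
    (ζT : Fin m → Fin r → Ω → ℝ) (ζ0 G : Fin m → Fin r → ℝ)
    (hL2 : ∀ i j, Integrable (fun ω => (ζT i j ω) ^ 2) P)
    (hmoment : ∀ i : Fin m, r ≤ (i : ℕ) → ∀ j : Fin r,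
      ∫ ω, (ζT i j ω) ^ 2 ∂P ≤
        (ζ0 i j) ^ 2 * Real.exp (-2 * (lamr - lamr1) * T) + (G i j) ^ 2 / (2 * (lamr - lamr1)))
    (hinit : η * ∑ i ∈ univ.filter (fun i : Fin m => r ≤ (i : ℕ)), ∑ j, (ζ0 i j) ^ 2 ≤ δ ^ 2)
    (hslack : 4 * η * r *
        (univ.sup' (univ_nonempty_iff.mpr ⟨⟨0, hr0⟩⟩)
          (fun j : Fin r => ∑ i ∈ univ.filter (fun i : Fin m => r ≤ (i : ℕ)), (G i j) ^ 2)) <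
      (lamr - lamr1) * ε)
    (hT : max 0 ((1 / (2 * (lamr - lamr1))) *
        Real.log (8 * (lamr - lamr1) * δ ^ 2 /
          ((lamr - lamr1) * ε - 4 * η * r *
            (univ.sup' (univ_nonempty_iff.mpr ⟨⟨0, hr0⟩⟩)
              (fun j : Fin r =>
                ∑ i ∈ univ.filter (fun i : Fin m => r ≤ (i : ℕ)), (G i j) ^ 2))))) ≤ T) :
    ENNReal.ofReal (3 / 4) ≤
      P {ω : Ω |
        η * ∑ i ∈ univ.filter (fun i : Fin m => r ≤ (i : ℕ)), ∑ j, (ζT i j ω) ^ 2 ≤ ε} := by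
  set F := univ.filter (fun i : Fin m => r ≤ (i : ℕ))
  set S : Ω → ℝ := fun ω => η * ∑ i ∈ F, ∑ j, (ζT i j ω) ^ 2
  have hΔ : 0 < lamr - lamr1 := sub_pos.mpr hgap
  have hnoise := sum_sum_le_card_nsmul_sup' F (univ_nonempty_iff.mpr ⟨⟨0, hr0⟩⟩)
    fun i j => (G i j) ^ 2
  rw [card_univ, Fintype.card_fin, nsmul_eq_mul] at hnoise
  have hmean : ∫ ω, S ω ∂P ≤ ε / 8 := calc
    _ ≤ η * ∑ i ∈ F, ∑ j, ((ζ0 i j) ^ 2 * Real.exp (-2 * (lamr - lamr1) * T)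
          + (G i j) ^ 2 / (2 * (lamr - lamr1))) := by
      rw [integral_const_mul η]
      gcongr
      exact integral_sum_sum_le _ _ hL2 fun i hi j _ => hmoment i (mem_filter.mp hi).2 j
    _ ≤ ε / 8 := mul_sum_sum_moment_bounds_le F univ ζ0 G hΔ hη.le hinit hnoise hslack
        ((le_max_right _ _).trans hT)
  have hS_int : Integrable S P :=
    (integrable_finsetSum _ fun i _ => integrable_finsetSum _ fun j _ => hL2 i j).const_mul η
  calc ENNReal.ofReal (3 / 4) ≤ ENNReal.ofReal (1 - (∫ ω, S ω ∂P) / ε) := by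
        have : (∫ ω, S ω ∂P) / ε ≤ 1 / 8 := by rw [div_le_iff₀ hε]; linarith
        gcongr; linarith
    _ ≤ P {ω | S ω ≤ ε} :=
        ofReal_one_sub_integral_div_le_measure_setOf_le (fun ω => by positivity) hS_int hε

/-- Proposition 4.10 of the paper (Stage 3, convergence to global optima), proved by
Markov's inequality: if the rescaled principal-angle coordinates at time `T` satisfy
`𝔼[ζ_ij(T)²] ≤ ζ_ij(0)² e^{−2ΔT} + G_ij²/(2Δ)` with `η Σ ζ_ij(0)² ≤ δ²`, `Δε > 4ηrG_m`
and `T ≥ max(0, (1/(2Δ)) log(8Δδ²/(Δε − 4ηrG_m)))`, then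
`ℙ(η Σ ζ_ij(T)² ≤ ε) ≥ 3/4`. -/
theorem stage3_convergence_time
    {Ω : Type*} [MeasurableSpace Ω] (P : Measure Ω) [IsProbabilityMeasure P]
    (m r : ℕ) (hr0 : 0 < r) (hrm : r < m)
    (lamr lamr1 : ℝ) (hgap : lamr1 < lamr)
    (ε η δ T : ℝ) (hε : 0 < ε) (hη : 0 < η) (hδ : 0 < δ)
    (ζT : Fin m → Fin r → Ω → ℝ) (ζ0 G : Fin m → Fin r → ℝ)
    (hζ0 : ∀ i j, 0 ≤ ζ0 i j) (hG : ∀ i j, 0 ≤ G i j)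
    (hL2 : ∀ i j, Integrable (fun ω => (ζT i j ω) ^ 2) P)
    (hmeasζ : ∀ i j, Measurable (ζT i j))
    (hmoment : ∀ i : Fin m, r ≤ (i : ℕ) → ∀ j : Fin r,
      ∫ ω, (ζT i j ω) ^ 2 ∂P ≤
        (ζ0 i j) ^ 2 * Real.exp (-2 * (lamr - lamr1) * T) + (G i j) ^ 2 / (2 * (lamr - lamr1)))
    (hinit : η * ∑ i ∈ univ.filter (fun i : Fin m => r ≤ (i : ℕ)), ∑ j, (ζ0 i j) ^ 2 ≤ δ ^ 2)
    (hslack : 4 * η * r *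
        (univ.sup' (univ_nonempty_iff.mpr ⟨⟨0, hr0⟩⟩)
          (fun j : Fin r => ∑ i ∈ univ.filter (fun i : Fin m => r ≤ (i : ℕ)), (G i j) ^ 2)) <
      (lamr - lamr1) * ε)
    (hT : max 0 ((1 / (2 * (lamr - lamr1))) *
        Real.log (8 * (lamr - lamr1) * δ ^ 2 /
          ((lamr - lamr1) * ε - 4 * η * r *
            (univ.sup' (univ_nonempty_iff.mpr ⟨⟨0, hr0⟩⟩)
              (fun j : Fin r =>
                ∑ i ∈ univ.filter (fun i : Fin m => r ≤ (i : ℕ)), (G i j) ^ 2))))) ≤ T) :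
    ENNReal.ofReal (3 / 4) ≤
      P {ω : Ω |
        η * ∑ i ∈ univ.filter (fun i : Fin m => r ≤ (i : ℕ)), ∑ j, (ζT i j ω) ^ 2 ≤ ε} :=
  stage3_convergence_time_general P m r hr0 lamr lamr1 hgap ε η δ T hε hη ζT ζ0 G hL2 hmoment hinit
    hslack hT
end
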